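/- Let x, x' satisfy [x,x'] = 2ih(x-x') in a suitable topological algebra (or as an identity of formal power series in k). Then e^{ikx}·x'·e^{-ikx} = x' - (e^{2hk} - 1)·δx, where δx = x - x'. -/

import Mathlib

open Complex PowerSeries
open Finset LinearMap

/-- The formal power series `e^{ika}` in the variable `k`, with coefficients in `A`:
its `k^n`-coefficient is `(i^n/n!) • aⁿ`. -/
noncomputable def expSeries' {A : Type*} [Ring A] [Algebra ℂ A] (a : A) : PowerSeries A :=
  PowerSeries.mk fun n => ((Complex.I ^ n) / (n.factorial : ℂ)) • a ^ n

lemma ad_pow_eq {A : Type*} [Ring A] [Algebra ℂ A] (c : ℂ) (x x' : A)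
    (hxx : x * x' - x' * x = c • (x - x')) (n : ℕ) :
    ((mulLeft ℂ x - mulRight ℂ x) ^ (n + 1)) x' = (-((-c) ^ (n+1))) • (x - x') := by
  have hδ : x * (x - x') - (x - x') * x = (-c) • (x - x') := by
    have h2 : x * (x - x') - (x - x') * x = -(x * x' - x' * x) := by noncomm_ring
    rw [h2, hxx, neg_smul]
  induction n with
  | zero =>
      rw [zero_add, pow_one, LinearMap.sub_apply, mulLeft_apply, mulRight_apply, hxx,
        pow_one, neg_neg]
  | succ n ih =>
      rw [pow_succ', Module.End.mul_apply, ih, map_smul, LinearMap.sub_apply,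
        mulLeft_apply, mulRight_apply, hδ, smul_smul]
      rw [show (n + 1 + 1) = (n + 1) + 1 from rfl, pow_succ]
      module

lemma ad_pow_expand {A : Type*} [Ring A] [Algebra ℂ A] (x x' : A) (n : ℕ) :
    ((mulLeft ℂ x - mulRight ℂ x) ^ n) x'
      = ∑ m ∈ range (n + 1), (n.choose m) • (x ^ m * x' * (-x) ^ (n - m)) := by
  have h1 : mulLeft ℂ x - mulRight ℂ x = mulLeft ℂ x + mulRight ℂ (-x) := by
    ext a; simp [mulLeft_apply, mulRight_apply, sub_eq_add_neg]
  have hc : Commute (mulLeft ℂ x) (mulRight ℂ (-x)) := commute_mulLeft_right x (-x)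
  rw [h1, hc.add_pow]
  rw [LinearMap.sum_apply]
  refine Finset.sum_congr rfl fun m _ => ?_
  rw [Module.End.mul_apply, Module.End.mul_apply, Module.End.natCast_apply,
    pow_mulLeft, pow_mulRight, mulRight_apply, mulLeft_apply]
  rw [smul_mul_assoc, mul_smul_comm, mul_assoc]

/-- `e^{ikx} x' e^{-ikx} = x' - (e^{2hk} - 1) δx` as formal power series in `k`,
where `[x,x'] = 2ih(x-x')` and `δx = x - x'`. -/
theorem conjugation_identity (A : Type*) [Ring A] [Algebra ℂ A] (h : ℝ) (x x' : A)
    (hxx : x * x' - x' * x = ((2 : ℂ) * Complex.I * (h : ℂ)) • (x - x')) :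
    expSeries' x * PowerSeries.C x' * expSeries' (-x)
      = PowerSeries.mk (fun n =>
          if n = 0 then x' else - ((((2 : ℂ) * (h : ℂ)) ^ n / (n.factorial : ℂ)) • (x - x'))) := by
  set c : ℂ := (2 : ℂ) * Complex.I * (h : ℂ) with hc
  ext n
  rw [PowerSeries.coeff_mk, PowerSeries.coeff_mul]
  simp only [PowerSeries.coeff_mul_C, expSeries', PowerSeries.coeff_mk]
  rcases n with _ | n
  · simp
  · rw [if_neg (Nat.succ_ne_zero n)]
    rw [Finset.Nat.sum_antidiagonal_eq_sum_range_succ_mk]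
    have key : ∑ m ∈ range (n + 1 + 1), ((n+1).choose m) • (x ^ m * x' * (-x) ^ (n + 1 - m))
        = (-((-c) ^ (n+1))) • (x - x') := by
      rw [← ad_pow_expand, ad_pow_eq c x x' hxx n]
    have step : ∀ m ∈ Finset.range (n + 1 + 1),
        ((Complex.I ^ m / (m.factorial : ℂ)) • x ^ m * x') *
          ((Complex.I ^ (n + 1 - m) / ((n + 1 - m).factorial : ℂ)) • (-x) ^ (n + 1 - m))
        = (Complex.I ^ (n+1) / ((n+1).factorial : ℂ)) •
            (((n+1).choose m) • (x ^ m * x' * (-x) ^ (n + 1 - m))) := by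
      intro m hm
      rw [Finset.mem_range] at hm
      have hmn : m ≤ n + 1 := Nat.lt_succ_iff.mp hm
      rw [smul_mul_assoc, smul_mul_assoc, mul_smul_comm, smul_smul,
        ← Nat.cast_smul_eq_nsmul ℂ, smul_smul, mul_assoc]
      congr 1
      have h1 : (m.factorial : ℂ) ≠ 0 := Nat.cast_ne_zero.mpr (Nat.factorial_ne_zero m)
      have h2 : ((n + 1 - m).factorial : ℂ) ≠ 0 := Nat.cast_ne_zero.mpr (Nat.factorial_ne_zero _)
      have h3 : (((n+1).factorial) : ℂ) ≠ 0 := Nat.cast_ne_zero.mpr (Nat.factorial_ne_zero _)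
      have hI : Complex.I ^ m * Complex.I ^ (n + 1 - m) = Complex.I ^ (n+1) := by
        rw [← pow_add, Nat.add_sub_cancel' hmn]
      have hfac : (((n+1).choose m : ℂ)) * (m.factorial : ℂ) * ((n + 1 - m).factorial : ℂ)
          = (((n+1).factorial : ℕ) : ℂ) := by
        rw [← Nat.cast_mul, ← Nat.cast_mul, Nat.choose_mul_factorial_mul_factorial hmn]
      field_simp
      rw [← hI, ← hfac]
      ring
    rw [Finset.sum_congr rfl step, ← Finset.smul_sum, key, smul_smul]
    have hscal : Complex.I ^ (n+1) / (((n+1).factorial : ℕ) : ℂ) * (-((-c) ^ (n+1)))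
        = -(((2 : ℂ) * (h : ℂ)) ^ (n+1) / (((n+1).factorial : ℕ) : ℂ)) := by
      have hIc : Complex.I * (-c) = (2:ℂ) * (h:ℂ) := by
        rw [hc]; ring_nf; rw [Complex.I_sq]; ring
      have hkey : Complex.I ^ (n+1) * (-((-c) ^ (n+1))) = -(((2:ℂ) * (h:ℂ)) ^ (n+1)) := by
        rw [mul_neg, ← mul_pow, hIc]
      field_simp
      rw [← mul_pow, hIc]
    rw [hscal, neg_smul, ← neg_smul]
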